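/- Let $M$ be the standard Gaussian density on $\mathbb{R}^n$, $n \ge 1$, and let $f(x) = |x|^2$. Then for every $R > 0$ and every $\epsilon \le 2$, $\int (\cosh(\epsilon^{-1} f(x) \mathbf{1}_{|x|>R}) - 1)\, M(x)\,dx = +\infty$. In particular, the truncated tails $f_R = f\,\mathbf{1}_{|x|>R}$ do not converge to $0$ in the Luxemburg norm of $L^{(\cosh-1)}(M)$ as $R \to \infty$, even though $f \in L^{(\cosh-1)}(M)$. -/

import Mathlib

/-!
Since `cosh - 1` is convex and vanishes at `0`, the Orlicz integral of `f` at `ρ ≤ ρ₀` is at most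
`ρ / ρ₀` times the one at `ρ₀`. For `|x|²` it is finite as soon as `|ρ| < 1/2`, because then
`cosh (ρ |x|²) M(x)` is dominated by a Gaussian; so it drops below `1` for small `ρ`, and every
tail `f_R ≤ f` has admissible constants `c` in its Luxemburg norm. For
`ρ = ε⁻¹ ≥ 1/2`, instead, `(cosh (ρ |x|²) - 1) M(x)` is bounded below by a positive constant outside
a ball, a set of infinite Lebesgue measure. Hence every admissible `c` for a tail is at least `2`.
-/

open MeasureTheory Real Filter Topology
open scoped ENNReal

noncomputable def gaussM (n : ℕ) (x : EuclideanSpace ℝ (Fin n)) : ℝ :=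
  (2 * π) ^ (-(n : ℝ) / 2) * Real.exp (-‖x‖ ^ 2 / 2)

noncomputable def orliczInt (n : ℕ) (ρ : ℝ) (f : EuclideanSpace ℝ (Fin n) → ℝ) : ℝ≥0∞ :=
  ∫⁻ x, ENNReal.ofReal (Real.cosh (ρ * f x) - 1) * ENNReal.ofReal (gaussM n x)

def MemLexp (n : ℕ) (f : EuclideanSpace ℝ (Fin n) → ℝ) : Prop :=
  ∃ ρ > 0, orliczInt n ρ f < ⊤

noncomputable def luxNorm (n : ℕ) (f : EuclideanSpace ℝ (Fin n) → ℝ) : ℝ :=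
  sInf {c : ℝ | 0 < c ∧ orliczInt n (1 / c) f ≤ 1}

noncomputable def coshStar (y : ℝ) : ℝ := ⨆ u : ℝ, (u * y - (Real.cosh u - 1))

lemma Real.cosh_le_exp_abs (x : ℝ) : cosh x ≤ exp |x| := by
  rw [cosh_eq]
  linarith [exp_le_exp.2 (le_abs_self x), exp_le_exp.2 (neg_le_abs x)]

-- Convexity of `exp` at `x` and at `-x`, averaged.
lemma Real.cosh_mul_sub_one_le {c : ℝ} (hc₀ : 0 ≤ c) (hc₁ : c ≤ 1) (x : ℝ) :
    cosh (c * x) - 1 ≤ c * (cosh x - 1) := by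
  have key (y : ℝ) : exp (c * y) ≤ c * exp y + (1 - c) := by
    simpa using convexOn_exp.2 (Set.mem_univ y) (Set.mem_univ 0) hc₀ (sub_nonneg.2 hc₁)
      (by ring)
  rw [cosh_eq, cosh_eq, ← mul_neg]
  linarith [key x, key (-x)]

lemma Real.quarter_le_cosh_inv_mul_sub_one_mul_exp {ε t : ℝ} (hε : 0 < ε) (hε₂ : ε ≤ 2)
    (ht : 6 ≤ t) : 1 / 4 ≤ (cosh (ε⁻¹ * t) - 1) * exp (-t / 2) := by
  have hcosh : exp (t / 2) ≤ 2 * cosh (ε⁻¹ * t) := by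
    have : t / 2 ≤ ε⁻¹ * t := by
      have : (2 : ℝ)⁻¹ ≤ ε⁻¹ := inv_anti₀ hε hε₂
      nlinarith
    have := cosh_le_cosh.2 (show |t / 2| ≤ |ε⁻¹ * t| by
      rw [abs_of_nonneg (by linarith), abs_of_nonneg (by linarith)]; exact this)
    rw [cosh_eq] at this
    linarith [exp_pos (-(t / 2))]
  have hfour : 4 ≤ exp (t / 2) := by linarith [add_one_le_exp (t / 2)]
  have hinv : exp (-t / 2) = (exp (t / 2))⁻¹ := by rw [← exp_neg]; ring_nf
  rw [hinv, ← div_eq_mul_inv, le_div_iff₀ (by positivity)]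
  linarith

lemma integrable_exp_neg_mul_sq_norm {V : Type*} [NormedAddCommGroup V] [InnerProductSpace ℝ V]
    [FiniteDimensional ℝ V] [MeasurableSpace V] [BorelSpace V] {b : ℝ} (hb : 0 < b) :
    Integrable fun v : V => exp (-b * ‖v‖ ^ 2) := by
  convert (GaussianFourier.integrable_cexp_neg_mul_sq_norm_add (V := V) (b := b)
    (by simpa using hb) 0 0).norm using 2 with v
  simp [Complex.norm_exp, ← Complex.ofReal_pow]

lemma measure_closedBall_compl_eq_top {E : Type*} [NormedAddCommGroup E] [NormedSpace ℝ E]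
    [FiniteDimensional ℝ E] [Nontrivial E] [MeasurableSpace E] [BorelSpace E] (μ : Measure E)
    [μ.IsAddHaarMeasure] (x : E) (r : ℝ) : μ (Metric.closedBall x r)ᶜ = ⊤ := by
  rw [measure_compl measurableSet_closedBall measure_closedBall_lt_top.ne,
    measure_univ_of_isAddLeftInvariant, ENNReal.top_sub measure_closedBall_lt_top.ne]

section GaussianOrlicz

variable {n : ℕ}

lemma gaussM_nonneg (x : EuclideanSpace ℝ (Fin n)) : 0 ≤ gaussM n x := by
  unfold gaussM; positivity

lemma orliczInt_mono_of_abs_le {ρ : ℝ} {f g : EuclideanSpace ℝ (Fin n) → ℝ}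
    (hfg : ∀ x, |f x| ≤ |g x|) : orliczInt n ρ f ≤ orliczInt n ρ g := by
  refine lintegral_mono fun x => mul_le_mul_left (ENNReal.ofReal_le_ofReal ?_) _
  rw [sub_le_sub_iff_right, cosh_le_cosh, abs_mul, abs_mul]
  exact mul_le_mul_of_nonneg_left (hfg x) (abs_nonneg ρ)

lemma orliczInt_le_mul_of_le {ρ ρ₀ : ℝ} (hρ : 0 ≤ ρ) (hρ₀ : 0 < ρ₀) (hρρ₀ : ρ ≤ ρ₀)
    (f : EuclideanSpace ℝ (Fin n) → ℝ) :
    orliczInt n ρ f ≤ ENNReal.ofReal (ρ / ρ₀) * orliczInt n ρ₀ f := by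
  rw [orliczInt, orliczInt, ← lintegral_const_mul' _ _ ENNReal.ofReal_ne_top]
  refine lintegral_mono fun x => ?_
  rw [← mul_assoc, ← ENNReal.ofReal_mul (div_nonneg hρ hρ₀.le)]
  refine mul_le_mul_left (ENNReal.ofReal_le_ofReal ?_) _
  have := cosh_mul_sub_one_le (div_nonneg hρ hρ₀.le) ((div_le_one hρ₀).2 hρρ₀) (ρ₀ * f x)
  rwa [← mul_assoc, div_mul_cancel₀ _ hρ₀.ne'] at this

lemma MemLexp.exists_orliczInt_le_one {f : EuclideanSpace ℝ (Fin n) → ℝ} (hf : MemLexp n f) :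
    ∃ c > 0, orliczInt n (1 / c) f ≤ 1 := by
  obtain ⟨ρ₀, hρ₀, hfin⟩ := hf
  set I := (orliczInt n ρ₀ f).toReal
  have hI : 0 ≤ I := ENNReal.toReal_nonneg
  refine ⟨(I + 1) / ρ₀, by positivity, ?_⟩
  have hρ : 1 / ((I + 1) / ρ₀) / ρ₀ = (I + 1)⁻¹ := by field_simp
  calc orliczInt n (1 / ((I + 1) / ρ₀)) f
      ≤ ENNReal.ofReal (1 / ((I + 1) / ρ₀) / ρ₀) * orliczInt n ρ₀ f := by
        refine orliczInt_le_mul_of_le (by positivity) hρ₀ ?_ f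
        rw [one_div_div, div_le_iff₀ (by positivity)]
        nlinarith
    _ = ENNReal.ofReal (I / (I + 1)) := by
        rw [hρ, ← ENNReal.ofReal_toReal hfin.ne, ← ENNReal.ofReal_mul (by positivity),
          inv_mul_eq_div]
    _ ≤ 1 := ENNReal.ofReal_le_one.2 ((div_le_one (by positivity)).2 (by linarith))

lemma orliczInt_sq_norm_lt_top {ρ : ℝ} (hρ : |ρ| < 1 / 2) :
    orliczInt n ρ (fun x => ‖x‖ ^ 2) < ⊤ := by
  set C : ℝ := (2 * π) ^ (-(n : ℝ) / 2)
  have hint := (integrable_exp_neg_mul_sq_norm (V := EuclideanSpace ℝ (Fin n))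
    (sub_pos.2 hρ)).const_mul C
  refine lt_of_le_of_lt (lintegral_mono fun x => ?_) hint.lintegral_lt_top
  rw [← ENNReal.ofReal_mul (by linarith [one_le_cosh (ρ * ‖x‖ ^ 2)])]
  refine ENNReal.ofReal_le_ofReal ?_
  have hcosh : cosh (ρ * ‖x‖ ^ 2) - 1 ≤ exp (|ρ| * ‖x‖ ^ 2) := by
    have := cosh_le_exp_abs (ρ * ‖x‖ ^ 2)
    rw [abs_mul, abs_of_nonneg (by positivity : (0 : ℝ) ≤ ‖x‖ ^ 2)] at this
    linarith
  calc (cosh (ρ * ‖x‖ ^ 2) - 1) * gaussM n x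
      ≤ exp (|ρ| * ‖x‖ ^ 2) * gaussM n x := mul_le_mul_of_nonneg_right hcosh (gaussM_nonneg x)
    _ = C * exp (-(1 / 2 - |ρ|) * ‖x‖ ^ 2) := by
        rw [gaussM, mul_left_comm, ← exp_add]; congr 2; ring

lemma memLexp_sq_norm : MemLexp n (fun x => ‖x‖ ^ 2) :=
  ⟨1 / 4, by norm_num, orliczInt_sq_norm_lt_top (by norm_num [abs_of_pos])⟩

lemma lintegral_cosh_inv_mul_sq_norm_tail_eq_top (hn : 1 ≤ n) (R : ℝ) {ε : ℝ} (hε : 0 < ε)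
    (hε₂ : ε ≤ 2) :
    (∫⁻ x, ENNReal.ofReal (cosh (ε⁻¹ * (if R < ‖x‖ then ‖x‖ ^ 2 else 0)) - 1) *
      ENNReal.ofReal (gaussM n x)) = ⊤ := by
  obtain ⟨m, rfl⟩ : ∃ m, n = m + 1 := ⟨n - 1, by omega⟩
  set C : ℝ := (2 * π) ^ (-((m + 1 : ℕ) : ℝ) / 2)
  have hC : 0 < C := by positivity
  set S := (Metric.closedBall (0 : EuclideanSpace ℝ (Fin (m + 1))) (max R 3))ᶜ
  have hbound : ∀ x ∈ S, ENNReal.ofReal (C / 4) ≤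
      ENNReal.ofReal (cosh (ε⁻¹ * (if R < ‖x‖ then ‖x‖ ^ 2 else 0)) - 1) *
        ENNReal.ofReal (gaussM (m + 1) x) := by
    intro x hx
    have hxr : max R 3 < ‖x‖ := by simpa [S] using hx
    have hquarter := quarter_le_cosh_inv_mul_sub_one_mul_exp hε hε₂
      (show 6 ≤ ‖x‖ ^ 2 by nlinarith [le_max_right R 3])
    rw [if_pos ((le_max_left R 3).trans_lt hxr),
      ← ENNReal.ofReal_mul (by linarith [one_le_cosh (ε⁻¹ * ‖x‖ ^ 2)])]
    refine ENNReal.ofReal_le_ofReal ?_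
    rw [gaussM, mul_left_comm]
    nlinarith
  refine top_le_iff.1 ?_
  calc ⊤ = ENNReal.ofReal (C / 4) * volume S := by
        rw [measure_closedBall_compl_eq_top, ENNReal.mul_top (by simpa using hC)]
    _ = ∫⁻ _ in S, ENNReal.ofReal (C / 4) := (setLIntegral_const _ _).symm
    _ ≤ ∫⁻ x in S, ENNReal.ofReal (cosh (ε⁻¹ * (if R < ‖x‖ then ‖x‖ ^ 2 else 0)) - 1) *
          ENNReal.ofReal (gaussM (m + 1) x) :=
        setLIntegral_mono' measurableSet_closedBall.compl hbound
    _ ≤ _ := setLIntegral_le_lintegral _ _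

lemma two_le_luxNorm_sq_norm_tail (hn : 1 ≤ n) (R : ℝ) :
    2 ≤ luxNorm n (fun x => if R < ‖x‖ then ‖x‖ ^ 2 else 0) := by
  have htail_le (x : EuclideanSpace ℝ (Fin n)) :
      |if R < ‖x‖ then ‖x‖ ^ 2 else 0| ≤ |‖x‖ ^ 2| := by
    split_ifs <;> simp
  -- `sInf ∅ = 0`, so the admissible set has to be shown nonempty.
  obtain ⟨c₀, hc₀, hle⟩ := (memLexp_sq_norm (n := n)).exists_orliczInt_le_one
  refine le_csInf ⟨c₀, hc₀, (orliczInt_mono_of_abs_le htail_le).trans hle⟩ ?_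
  rintro c ⟨hc, hle⟩
  by_contra! hc₂
  rw [orliczInt, one_div, lintegral_cosh_inv_mul_sq_norm_tail_eq_top hn R hc hc₂.le] at hle
  exact absurd hle (by simp)

end GaussianOrlicz

theorem sq_norm_not_in_exponential_class (n : ℕ) (hn : 1 ≤ n) :
    MemLexp n (fun x => ‖x‖ ^ 2) ∧
    (∀ R > 0, ∀ ε : ℝ, 0 < ε → ε ≤ 2 →
      (∫⁻ x, ENNReal.ofReal
          (Real.cosh (ε⁻¹ * (if R < ‖x‖ then ‖x‖ ^ 2 else 0)) - 1) *
          ENNReal.ofReal (gaussM n x)) = ⊤) ∧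
    ¬ Tendsto (fun R : ℝ => luxNorm n (fun x => if R < ‖x‖ then ‖x‖ ^ 2 else 0))
        atTop (𝓝 0) := by
  refine ⟨memLexp_sq_norm, fun R _ ε hε hε₂ =>
    lintegral_cosh_inv_mul_sq_norm_tail_eq_top hn R hε hε₂, fun htendsto => ?_⟩
  obtain ⟨R, hR⟩ := (htendsto.eventually (gt_mem_nhds one_pos)).exists
  linarith [two_le_luxNorm_sq_norm_tail hn R]
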